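/- Assume the variables (U_s)_{s∈S} are conditionally independent given Y. Then the set function F(S) = I(U_S; Y) on subsets S of a finite ground set is submodular: for S ⊆ T and element u ∉ T, F(S ∪ {u}) − F(S) ≥ F(T ∪ {u}) − F(T). -/

import Mathlib

/-!
By the chain rule, adding `u` to `S` raises `I(U_S; Y)` by `H(U_u | U_S) - H(U_u | Y, U_S)`, and
conditional independence turns the second term into `H(U_u | Y)`, which does not depend on `S`.
So the gain decreases in `S` because `U_S` is a function of `U_T` for `S ⊆ T`, and conditioning
on a finer variable can only lower entropy; the latter is the log-sum inequality applied on each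
fibre of the coarsening map.
-/

open Finset

/-- Probability mass of the event `X = x` under a pmf `p` on a finite sample space. -/
noncomputable def pmassOf {Ω : Type*} [Fintype Ω] {γ : Type*} [DecidableEq γ]
    (p : Ω → ℝ) (X : Ω → γ) (x : γ) : ℝ :=
  ∑ ω, if X ω = x then p ω else 0

/-- Shannon entropy of a discrete random variable. -/
noncomputable def entOf {Ω : Type*} [Fintype Ω] {γ : Type*} [Fintype γ] [DecidableEq γ]
    (p : Ω → ℝ) (X : Ω → γ) : ℝ :=
  -∑ x, pmassOf p X x * Real.log (pmassOf p X x)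

/-- Conditional Shannon entropy H(X|Y) = H(X,Y) - H(Y). -/
noncomputable def condEntOf {Ω : Type*} [Fintype Ω] {γ δ : Type*}
    [Fintype γ] [DecidableEq γ] [Fintype δ] [DecidableEq δ]
    (p : Ω → ℝ) (X : Ω → γ) (Y : Ω → δ) : ℝ :=
  entOf p (fun ω => (X ω, Y ω)) - entOf p Y

/-- Mutual information I(X;Y) = H(X) + H(Y) - H(X,Y). -/
noncomputable def miOf {Ω : Type*} [Fintype Ω] {γ δ : Type*}
    [Fintype γ] [DecidableEq γ] [Fintype δ] [DecidableEq δ]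
    (p : Ω → ℝ) (X : Ω → γ) (Y : Ω → δ) : ℝ :=
  entOf p X + entOf p Y - entOf p (fun ω => (X ω, Y ω))

/-- Conditional mutual information I(X;Y|Z) = H(X|Z) + H(Y|Z) - H(X,Y|Z). -/
noncomputable def cmiOf {Ω : Type*} [Fintype Ω] {γ δ ε : Type*}
    [Fintype γ] [DecidableEq γ] [Fintype δ] [DecidableEq δ] [Fintype ε] [DecidableEq ε]
    (p : Ω → ℝ) (X : Ω → γ) (Y : Ω → δ) (Z : Ω → ε) : ℝ :=
  condEntOf p X Z + condEntOf p Y Z - condEntOf p (fun ω => (X ω, Y ω)) Z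

/-- Joint random variable of a finite family. -/
def jointFin {Ω : Type*} {γ : Type*} {k : ℕ} (U : Fin k → Ω → γ) : Ω → (Fin k → γ) :=
  fun ω i => U i ω

/-- Total correlation (multi-information) 𝓘(U₁,...,U_k) = ∑ H(Uᵢ) − H(U₁,...,U_k). -/
noncomputable def totalCorrFin {Ω : Type*} [Fintype Ω] {γ : Type*} [Fintype γ] [DecidableEq γ]
    {k : ℕ} (p : Ω → ℝ) (U : Fin k → Ω → γ) : ℝ :=
  (∑ i, entOf p (U i)) - entOf p (jointFin U)

/-- Conditional total correlation 𝓘(U₁,...,U_k | Y) = ∑ H(Uᵢ|Y) − H(U₁,...,U_k|Y). -/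
noncomputable def condTotalCorrFin {Ω : Type*} [Fintype Ω] {γ δ : Type*}
    [Fintype γ] [DecidableEq γ] [Fintype δ] [DecidableEq δ]
    {k : ℕ} (p : Ω → ℝ) (U : Fin k → Ω → γ) (Y : Ω → δ) : ℝ :=
  (∑ i, condEntOf p (U i) Y) - condEntOf p (jointFin U) Y

/-- Joint random variable of a subfamily indexed by a finite set. -/
def jointOn {Ω γ ι : Type*} (U : ι → Ω → γ) (S : Finset ι) : Ω → (S → γ) :=
  fun ω i => U i.1 ω

/-- Total correlation of the subfamily indexed by `S`. -/
noncomputable def totalCorrOn {Ω γ ι : Type*} [Fintype Ω] [DecidableEq ι] [Fintype γ] [DecidableEq γ]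
    (p : Ω → ℝ) (U : ι → Ω → γ) (S : Finset ι) : ℝ :=
  (∑ i ∈ S, entOf p (U i)) - entOf p (jointOn U S)

/-- Conditional total correlation of the subfamily indexed by `S`, given `Y`. -/
noncomputable def condTotalCorrOn {Ω γ δ ι : Type*} [Fintype Ω] [DecidableEq ι]
    [Fintype γ] [DecidableEq γ] [Fintype δ] [DecidableEq δ]
    (p : Ω → ℝ) (U : ι → Ω → γ) (Y : Ω → δ) (S : Finset ι) : ℝ :=
  (∑ i ∈ S, condEntOf p (U i) Y) - condEntOf p (jointOn U S) Y

lemma mul_log_div_eq_of_le {a b : ℝ} (ha : 0 ≤ a) (hab : a ≤ b) :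
    a * Real.log (a / b) = a * Real.log a - a * Real.log b := by
  rcases ha.eq_or_lt with rfl | ha
  · simp
  · rw [Real.log_div ha.ne' (ha.trans_le hab).ne', mul_sub]

lemma mul_log_add_sub_le_mul_log_div {a b c : ℝ} (ha : 0 ≤ a) (hab : a ≤ b) (hc : 0 < c) :
    a * Real.log c + a - b * c ≤ a * Real.log (a / b) := by
  rcases ha.eq_or_lt with rfl | ha
  · simp only [zero_mul, zero_add, zero_sub, neg_nonpos]
    exact mul_nonneg (ha.trans hab) hc.le
  have hb : 0 < b := ha.trans_le hab
  have key := Real.log_le_sub_one_of_pos (show 0 < b * c / a by positivity)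
  rw [Real.log_div (by positivity) ha.ne', Real.log_mul hb.ne' hc.ne'] at key
  rw [Real.log_div ha.ne' hb.ne']
  have hcancel : a * (b * c / a - 1) = b * c - a := by field_simp
  nlinarith [mul_le_mul_of_nonneg_left key ha.le]

lemma sum_mul_log_sum_div_sum_le {κ : Type*} (s : Finset κ) (a b : κ → ℝ)
    (ha : ∀ i ∈ s, 0 ≤ a i) (hab : ∀ i ∈ s, a i ≤ b i) :
    (∑ i ∈ s, a i) * Real.log ((∑ i ∈ s, a i) / ∑ i ∈ s, b i) ≤
      ∑ i ∈ s, a i * Real.log (a i / b i) := by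
  set A := ∑ i ∈ s, a i
  set B := ∑ i ∈ s, b i
  have hA0 : 0 ≤ A := sum_nonneg ha
  rcases hA0.eq_or_lt with hA | hA
  · have hzero : ∀ i ∈ s, a i = 0 := (sum_eq_zero_iff_of_nonneg ha).1 hA.symm
    rw [← hA, zero_mul, sum_eq_zero fun i hi => by rw [hzero i hi, zero_mul]]
  have hB : 0 < B := hA.trans_le (sum_le_sum hab)
  calc A * Real.log (A / B) = ∑ i ∈ s, (a i * Real.log (A / B) + a i - b i * (A / B)) := by
        rw [sum_sub_distrib, sum_add_distrib, ← sum_mul, ← sum_mul]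
        field_simp
        ring
    _ ≤ ∑ i ∈ s, a i * Real.log (a i / b i) := sum_le_sum fun i hi =>
        mul_log_add_sub_le_mul_log_div (ha i hi) (hab i hi) (by positivity)

section Entropy

variable {Ω γ δ ε : Type*} [Fintype Ω] [DecidableEq γ] [DecidableEq δ] [DecidableEq ε]
  {p : Ω → ℝ}

lemma pmassOf_nonneg (hp : ∀ ω, 0 ≤ p ω) (X : Ω → γ) (x : γ) : 0 ≤ pmassOf p X x :=
  sum_nonneg fun ω _ => by split_ifs <;> simp [hp ω]

lemma pmassOf_pair_le_right (hp : ∀ ω, 0 ≤ p ω) (X : Ω → γ) (W : Ω → δ) (x : γ) (w : δ) :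
    pmassOf p (fun ω => (X ω, W ω)) (x, w) ≤ pmassOf p W w :=
  sum_le_sum fun ω _ => by
    by_cases hX : X ω = x <;> by_cases hW : W ω = w <;> simp [hX, hW, hp ω]

lemma sum_pmassOf_pair_left [Fintype γ] (X : Ω → γ) (W : Ω → δ) (w : δ) :
    ∑ x, pmassOf p (fun ω => (X ω, W ω)) (x, w) = pmassOf p W w := by
  unfold pmassOf
  rw [sum_comm]
  refine sum_congr rfl fun ω _ => ?_
  by_cases hW : W ω = w <;> simp [hW, Prod.ext_iff]

lemma pmassOf_pair_comp_right [Fintype δ] (X : Ω → γ) (W : Ω → δ) (f : δ → ε) (x : γ) (z : ε) :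
    pmassOf p (fun ω => (X ω, f (W ω))) (x, z) =
      ∑ w with f w = z, pmassOf p (fun ω => (X ω, W ω)) (x, w) := by
  unfold pmassOf
  rw [sum_comm]
  refine sum_congr rfl fun ω _ => ?_
  by_cases hx : X ω = x <;> simp [hx, Prod.ext_iff]

lemma pmassOf_comp [Fintype δ] (W : Ω → δ) (f : δ → ε) (z : ε) :
    pmassOf p (fun ω => f (W ω)) z = ∑ w with f w = z, pmassOf p W w := by
  unfold pmassOf
  rw [sum_comm]
  exact sum_congr rfl fun ω _ => by simp

lemma entOf_comp_of_injective [Fintype γ] [Fintype δ] (X : Ω → γ) {f : γ → δ}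
    (hf : Function.Injective f) : entOf p (fun ω => f (X ω)) = entOf p X := by
  have hmass (x : γ) : pmassOf p (fun ω => f (X ω)) (f x) = pmassOf p X x := by
    simp [pmassOf, hf.eq_iff]
  have hzero (y : δ) (hy : y ∉ Set.range f) : pmassOf p (fun ω => f (X ω)) y = 0 :=
    sum_eq_zero fun ω _ => if_neg fun h => hy ⟨X ω, h⟩
  unfold entOf
  congr 1
  symm
  exact Fintype.sum_of_injective f hf _ _ (fun y hy => by rw [hzero y hy, zero_mul])
    (fun x => by rw [hmass])

lemma condEntOf_eq_neg_sum [Fintype γ] [Fintype δ] (hp : ∀ ω, 0 ≤ p ω) (X : Ω → γ) (W : Ω → δ) :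
    condEntOf p X W =
      -∑ x, ∑ w, pmassOf p (fun ω => (X ω, W ω)) (x, w) *
        Real.log (pmassOf p (fun ω => (X ω, W ω)) (x, w) / pmassOf p W w) := by
  set P := pmassOf p (fun ω => (X ω, W ω))
  have hterm (x : γ) (w : δ) : P (x, w) * Real.log (P (x, w) / pmassOf p W w) =
      P (x, w) * Real.log (P (x, w)) - P (x, w) * Real.log (pmassOf p W w) :=
    mul_log_div_eq_of_le (pmassOf_nonneg hp _ (x, w)) (pmassOf_pair_le_right hp X W x w)
  have hmarginal : ∑ x, ∑ w, P (x, w) * Real.log (pmassOf p W w) =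
      ∑ w, pmassOf p W w * Real.log (pmassOf p W w) := by
    rw [sum_comm]
    exact sum_congr rfl fun w _ => by rw [← sum_mul, sum_pmassOf_pair_left]
  simp only [hterm, sum_sub_distrib, hmarginal]
  unfold condEntOf entOf
  rw [Fintype.sum_prod_type]
  ring

lemma condEntOf_le_condEntOf_comp [Fintype γ] [Fintype δ] [Fintype ε] (hp : ∀ ω, 0 ≤ p ω)
    (X : Ω → γ) (W : Ω → δ) (f : δ → ε) :
    condEntOf p X W ≤ condEntOf p X (fun ω => f (W ω)) := by
  rw [condEntOf_eq_neg_sum hp, condEntOf_eq_neg_sum hp, neg_le_neg_iff]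
  refine sum_le_sum fun x _ => ?_
  rw [← sum_fiberwise univ f]
  refine sum_le_sum fun z _ => ?_
  rw [pmassOf_pair_comp_right, pmassOf_comp]
  exact sum_mul_log_sum_div_sum_le _ _ _ (fun _ _ => pmassOf_nonneg hp _ _)
    (fun w _ => pmassOf_pair_le_right hp X W x w)

lemma miOf_comp_left_of_injective [Fintype γ] [Fintype δ] [Fintype ε] (X : Ω → γ) (Y : Ω → ε)
    {f : γ → δ} (hf : Function.Injective f) :
    miOf p (fun ω => f (X ω)) Y = miOf p X Y := by
  unfold miOf
  rw [entOf_comp_of_injective X hf,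
    ← entOf_comp_of_injective (fun ω => (X ω, Y ω)) (hf.prodMap Function.injective_id)]
  rfl

lemma miOf_pair_sub_miOf [Fintype γ] [Fintype δ] [Fintype ε] (X : Ω → γ) (Y : Ω → δ)
    (Z : Ω → ε) :
    miOf p (fun ω => (X ω, Z ω)) Y - miOf p Z Y =
      condEntOf p X Z - condEntOf p X (fun ω => (Y ω, Z ω)) := by
  have hassoc : entOf p (fun ω => ((X ω, Z ω), Y ω)) = entOf p (fun ω => (X ω, Y ω, Z ω)) := by
    refine (entOf_comp_of_injective (f := fun q : (γ × ε) × δ => (q.1.1, q.2, q.1.2)) _ ?_).symm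
    rintro ⟨⟨x, z⟩, y⟩ ⟨⟨x', z'⟩, y'⟩ h
    simp only [Prod.mk.injEq] at h ⊢
    tauto
  have hswap : entOf p (fun ω => (Z ω, Y ω)) = entOf p (fun ω => (Y ω, Z ω)) :=
    entOf_comp_of_injective (fun ω => (Y ω, Z ω)) Prod.swap_injective
  unfold miOf condEntOf
  rw [hassoc, hswap]
  ring

end Entropy

lemma miOf_jointOn_insert_sub_miOf {Ω α β ι : Type*} [Fintype Ω] [DecidableEq ι]
    [Fintype α] [DecidableEq α] [Fintype β] [DecidableEq β]
    (p : Ω → ℝ) (U : ι → Ω → α) (Y : Ω → β) (u : ι) (R : Finset ι) :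
    miOf p (jointOn U (insert u R)) Y - miOf p (jointOn U R) Y =
      condEntOf p (U u) (jointOn U R) - condEntOf p (U u) (fun ω => (Y ω, jointOn U R ω)) := by
  have hsplit : Function.Injective fun g : ↥(insert u R) → α =>
      (g ⟨u, mem_insert_self u R⟩, restrict₂ (π := fun _ => α) (subset_insert u R) g) := by
    intro g g' h
    simp only [Prod.mk.injEq] at h
    funext ⟨i, hi⟩
    rcases mem_insert.1 hi with rfl | hiR
    · exact h.1
    · exact congrFun h.2 ⟨i, hiR⟩
  rw [← miOf_pair_sub_miOf, ← miOf_comp_left_of_injective _ Y hsplit]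
  rfl

theorem jointMI_submodular_general {Ω α β ι : Type*} [Fintype Ω] [DecidableEq ι]
    [Fintype α] [DecidableEq α] [Fintype β] [DecidableEq β]
    (p : Ω → ℝ) (hp : ∀ ω, 0 ≤ p ω)
    (U : ι → Ω → α) (Y : Ω → β)
    (hci : ∀ (S : Finset ι) (u : ι), u ∉ S →
      condEntOf p (U u) (fun ω => (Y ω, jointOn U S ω)) = condEntOf p (U u) Y) :
    ∀ (S T : Finset ι) (u : ι), S ⊆ T → u ∉ T →
      miOf p (jointOn U (insert u T)) Y - miOf p (jointOn U T) Y ≤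
        miOf p (jointOn U (insert u S)) Y - miOf p (jointOn U S) Y := by
  intro S T u hST huT
  rw [miOf_jointOn_insert_sub_miOf, miOf_jointOn_insert_sub_miOf, hci T u huT,
    hci S u fun huS => huT (hST huS)]
  exact sub_le_sub_right
    (condEntOf_le_condEntOf_comp hp (U u) (jointOn U T) (restrict₂ (π := fun _ => α) hST)) _

/-- Under conditional independence of the variables given Y, the set function
S ↦ I(U_S; Y) is submodular. -/
theorem jointMI_submodular {Ω α β ι : Type*} [Fintype Ω] [Fintype ι] [DecidableEq ι]
    [Fintype α] [DecidableEq α] [Fintype β] [DecidableEq β]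
    (p : Ω → ℝ) (hp : ∀ ω, 0 ≤ p ω) (hp1 : ∑ ω, p ω = 1)
    (U : ι → Ω → α) (Y : Ω → β)
    (hci : ∀ (S : Finset ι) (u : ι), u ∉ S →
      condEntOf p (U u) (fun ω => (Y ω, jointOn U S ω)) = condEntOf p (U u) Y) :
    ∀ (S T : Finset ι) (u : ι), S ⊆ T → u ∉ T →
      miOf p (jointOn U (insert u T)) Y - miOf p (jointOn U T) Y ≤
        miOf p (jointOn U (insert u S)) Y - miOf p (jointOn U S) Y :=
  jointMI_submodular_general p hp U Y hci
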